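/- arXiv:2011.00936 — 6 statements merged into one kernel-verified Lean document; each statement's English description precedes it below -/
import Mathlib

section
/- Let G be an oriented graph (a directed graph in which for any two vertices u, v, at most one of (u,v) and (v,u) is an edge) such that in the subgraph induced by any three vertices, either some vertex has in-degree 2, or the three vertices form a directed 3-cycle. Then there is at most one pair of distinct vertices u, v with neither (u,v) nor (v,u) an edge. -/
/-- An oriented graph in which every induced 3-vertex subgraph
has a vertex of in-degree 2 or is a directed 3-cycle has at most one pair of
non-adjacent vertices. -/
theorem at_most_one_nonadjacent_pair {V : Type*} (E : V → V → Prop)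
    (irrefl : ∀ v : V, ¬ E v v)
    (oriented : ∀ u v : V, u ≠ v → ¬(E u v ∧ E v u))
    (htriple : ∀ a b c : V, a ≠ b → a ≠ c → b ≠ c →
      ((E b a ∧ E c a) ∨ (E a b ∧ E c b) ∨ (E a c ∧ E b c)) ∨
      ((E a b ∧ E b c ∧ E c a) ∨ (E a c ∧ E c b ∧ E b a))) :
    ∀ u v u' v' : V, u ≠ v → u' ≠ v' →
      ¬(E u v ∨ E v u) → ¬(E u' v' ∨ E v' u') →
      (u = u' ∧ v = v') ∨ (u = v' ∧ v = u') := by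
  have key : ∀ u v : V, u ≠ v → ¬(E u v ∨ E v u) →
      ∀ w : V, w ≠ u → w ≠ v → E u w ∧ E v w := by
    intro u v huv hn w hwu hwv
    have h := htriple u v w huv (fun h => hwu h.symm) (fun h => hwv h.symm)
    rcases h with (⟨h1, _⟩ | ⟨h1, _⟩ | h1) | (⟨h1, _⟩ | ⟨_, _, h1⟩)
    · exact absurd (Or.inr h1) hn
    · exact absurd (Or.inl h1) hn
    · exact h1
    · exact absurd (Or.inl h1) hn
    · exact absurd (Or.inr h1) hn
  intro u v u' v' huv hu'v' hn hn'
  by_cases h1 : u = u'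
  · subst h1
    by_cases h2 : v = v'
    · subst h2; exact Or.inl ⟨rfl, rfl⟩
    · exfalso
      have := key u v huv hn v' (Ne.symm hu'v') (fun h => h2 h.symm)
      exact hn' (Or.inl this.1)
  · by_cases h2 : v = u'
    · subst h2
      by_cases h3 : u = v'
      · subst h3; exact Or.inr ⟨rfl, rfl⟩
      · exfalso
        have := key u v huv hn v' (fun h => h3 h.symm) (Ne.symm hu'v')
        exact hn' (Or.inl this.2)
    · exfalso
      have huu' := key u v huv hn u' (fun h => h1 h.symm) (fun h => h2 h.symm)
      by_cases h3 : u = v'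
      · subst h3
        exact hn' (Or.inr huu'.1)
      · by_cases h4 : v = v'
        · subst h4
          exact hn' (Or.inr huu'.2)
        · have := key u' v' hu'v' hn' u h1 h3
          exact oriented u u' (fun h => h1 h) ⟨huu'.1, this.1⟩
end

section
/- Let G be an oriented graph on a finite vertex set with at least two vertices, such that in the subgraph induced by any three vertices, some vertex has in-degree 2. Then either G is a transitive tournament, or G is obtained from a transitive tournament by deleting the edge between the first two vertices in its topological ordering. Equivalently: either every pair of distinct vertices is adjacent and the edge relation is a strict linear order, or there is exactly one non-adjacent pair {a,b}, the subgraph induced on the remaining vertices is a transitive tournament, and both a and b have edges to every other vertex, with the whole graph acyclic and the edge relation transitive on adjacent triples. -/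
/-- An oriented graph on at least two vertices in which every induced
3-vertex subgraph has a vertex of in-degree 2 is either a transitive tournament,
or is obtained from a transitive tournament by removing the edge between the
first two vertices of its topological ordering: there is exactly one non-adjacent
pair {a,b}, the induced subgraph on the remaining vertices is a transitive
tournament, both a and b have edges to every other vertex, the whole graph is
acyclic, and the edge relation is transitive on adjacent triples. -/
theorem unassisted_graph_classification {V : Type*} [Fintype V]
    (E : V → V → Prop)
    (hcard : 2 ≤ Fintype.card V)
    (irrefl : ∀ v : V, ¬ E v v)
    (oriented : ∀ u v : V, u ≠ v → ¬(E u v ∧ E v u))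
    (htriple : ∀ a b c : V, a ≠ b → a ≠ c → b ≠ c →
      (E b a ∧ E c a) ∨ (E a b ∧ E c b) ∨ (E a c ∧ E b c)) :
    -- Case (a): a transitive tournament
    ((∀ u v : V, u ≠ v → (E u v ∨ E v u)) ∧ (∀ u v w : V, E u v → E v w → E u w))
    ∨
    -- Case (b): a transitive tournament with the edge between the first two
    -- vertices of the topological ordering removed
    (∃ a b : V, a ≠ b ∧ ¬(E a b ∨ E b a) ∧
      -- {a,b} is the unique non-adjacent pair
      (∀ u v : V, u ≠ v → ¬(E u v ∨ E v u) →
        (u = a ∧ v = b) ∨ (u = b ∧ v = a)) ∧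
      -- the induced subgraph on the remaining vertices is a tournament
      (∀ u v : V, u ≠ a → u ≠ b → v ≠ a → v ≠ b → u ≠ v → (E u v ∨ E v u)) ∧
      -- ... which is transitive
      (∀ u v w : V, u ≠ a → u ≠ b → v ≠ a → v ≠ b → w ≠ a → w ≠ b →
        E u v → E v w → E u w) ∧
      -- both a and b have edges to every other vertex
      (∀ w : V, w ≠ a → w ≠ b → E a w ∧ E b w) ∧
      -- the whole graph is acyclic
      (∀ v : V, ¬ Relation.TransGen E v v) ∧
      -- the edge relation is transitive on adjacent triples
      (∀ u v w : V, E u v → E v w → (E u w ∨ E w u) → E u w)) := by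
  classical
  -- E is fully transitive
  have trans : ∀ u v w : V, E u v → E v w → E u w := by
    intro u v w huv hvw
    have huv' : u ≠ v := fun h => irrefl v (h ▸ huv)
    have hvw' : v ≠ w := fun h => irrefl w (h ▸ hvw)
    by_cases huw : u = w
    · exact absurd ⟨huv, huw ▸ hvw⟩ (oriented u v huv')
    · rcases htriple u v w huv' huw hvw' with ⟨h1, _⟩ | ⟨_, h2⟩ | ⟨h3, _⟩
      · exact absurd ⟨huv, h1⟩ (oriented u v huv')
      · exact absurd ⟨hvw, h2⟩ (oriented v w hvw')
      · exact h3
  -- no cycles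
  have acyc : ∀ v : V, ¬ Relation.TransGen E v v := by
    have key : ∀ u v : V, Relation.TransGen E u v → E u v := by
      intro u v h
      induction h with
      | single h => exact h
      | tail _ h ih => exact trans _ _ _ ih h
    intro v h
    exact irrefl v (key v v h)
  by_cases hall : ∀ u v : V, u ≠ v → (E u v ∨ E v u)
  · exact Or.inl ⟨hall, trans⟩
  · push_neg at hall
    obtain ⟨a, b, hab, hnadj⟩ := hall
    have hnadj' : ¬(E a b ∨ E b a) := fun h => h.elim (fun h => hnadj.1 h) (fun h => hnadj.2 h)
    -- both a and b dominate every other vertex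
    have hdom : ∀ w : V, w ≠ a → w ≠ b → E a w ∧ E b w := by
      intro w hwa hwb
      rcases htriple a b w hab (Ne.symm hwa) (Ne.symm hwb) with ⟨h1, _⟩ | ⟨h2, _⟩ | h3
      · exact absurd (Or.inr h1) hnadj'
      · exact absurd (Or.inl h2) hnadj'
      · exact h3
    refine Or.inr ⟨a, b, hab, hnadj', ?_, ?_, ?_, hdom, acyc, fun u v w h1 h2 _ => trans u v w h1 h2⟩
    · -- uniqueness
      intro u v huv hnadj2
      have hdom2 : ∀ w : V, w ≠ u → w ≠ v → E u w ∧ E v w := by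
        intro w hwu hwv
        rcases htriple u v w huv (Ne.symm hwu) (Ne.symm hwv) with ⟨h1, _⟩ | ⟨h2, _⟩ | h3
        · exact absurd (Or.inr h1) hnadj2
        · exact absurd (Or.inl h2) hnadj2
        · exact h3
      have hu : u = a ∨ u = b := by
        by_contra h
        push_neg at h
        obtain ⟨hua, hub⟩ := h
        have hEau : E a u := (hdom u hua hub).1
        have hEbu : E b u := (hdom u hua hub).2
        by_cases hva : v = a
        · subst hva
          have : E u b := (hdom2 b (Ne.symm hub) (Ne.symm hab)).1
          exact oriented u b hub ⟨this, hEbu⟩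
        · by_cases hvb : v = b
          · subst hvb
            have : E u a := (hdom2 a (Ne.symm hua) hab).1
            exact oriented u a hua ⟨this, hEau⟩
          · have : E u a := (hdom2 a (Ne.symm hua) (Ne.symm hva)).1
            exact oriented u a hua ⟨this, hEau⟩
      rcases hu with rfl | rfl
      · left
        refine ⟨rfl, ?_⟩
        by_contra hvb
        by_cases hva : v = u
        · exact huv (hva.symm)
        · exact hnadj2 (Or.inl (hdom v hva hvb).1)
      · right
        refine ⟨rfl, ?_⟩
        by_contra hva
        by_cases hvb : v = u
        · exact huv (hvb.symm)
        · exact hnadj2 (Or.inl (hdom v hva hvb).2)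
    · -- tournament on remaining
      intro u v hua hub hva hvb huv
      by_contra h
      rcases (show (u = a ∧ v = b) ∨ (u = b ∧ v = a) from by
        -- reuse uniqueness argument inline: contradiction since u ≠ a, u ≠ b
        exfalso
        have hdom2 : ∀ w : V, w ≠ u → w ≠ v → E u w ∧ E v w := by
          intro w hwu hwv
          rcases htriple u v w huv (Ne.symm hwu) (Ne.symm hwv) with ⟨h1, _⟩ | ⟨h2, _⟩ | h3
          · exact absurd (Or.inr h1) h
          · exact absurd (Or.inl h2) h
          · exact h3
        have hEau : E a u := (hdom u hua hub).1
        have : E u a := (hdom2 a (Ne.symm hua) (Ne.symm hva)).1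
        exact oriented u a hua ⟨this, hEau⟩) with ⟨h1, _⟩ | ⟨h1, _⟩
      · exact hua h1
      · exact hub h1
    · exact fun u v w _ _ _ _ _ _ h1 h2 => trans u v w h1 h2
end

section
/- Let G be a directed graph on a finite vertex set such that for every vertex v, the set S(v) = {u : u ≠ v and (u,v) is not an edge} induces a subgraph in which every pair of distinct vertices is adjacent (i.e., for all distinct u, w ∈ S(v), (u,w) or (w,u) is an edge). Then every vertex of G is non-adjacent to at most one other vertex. -/
/-- In a (finite, oriented) directed graph in which, for every vertex
v, every two distinct vertices of S(v) = {u ≠ v : (u,v) not an edge} are adjacent,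
every vertex is non-adjacent to at most one other vertex. -/
theorem nonadjacent_to_at_most_one {V : Type*} [Fintype V] (E : V → V → Prop)
    (irrefl : ∀ v : V, ¬ E v v)
    (oriented : ∀ u v : V, u ≠ v → ¬(E u v ∧ E v u))
    (hS : ∀ v u w : V, u ≠ v → ¬ E u v → w ≠ v → ¬ E w v → u ≠ w →
      (E u w ∨ E w u)) :
    ∀ v u w : V, u ≠ v → w ≠ v →
      ¬(E v u ∨ E u v) → ¬(E v w ∨ E w v) → u = w := by
  intro v u w huv hwv hnu hnw
  by_contra huw
  push_neg at hnu hnw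
  rcases hS v u w huv hnu.2 hwv hnw.2 huw with h | h
  · have hwu : ¬ E w u := fun hwu => oriented u w huw ⟨h, hwu⟩
    exact (hS u v w huv.symm hnu.1 (fun hh => huw hh.symm) hwu hwv.symm).elim hnw.1 hnw.2
  · have huw' : ¬ E u w := fun huw' => oriented u w huw ⟨huw', h⟩
    exact (hS w v u hwv.symm hnw.1 huw huw' huv.symm).elim hnu.1 hnu.2
end

section
/- Let G be an oriented graph on a finite vertex set such that for every vertex v, the set S(v) = {u : u ≠ v and (u,v) is not an edge} induces a tournament (every pair of distinct vertices in S(v) is joined by exactly one directed edge). Then the set X of vertices that are non-adjacent to some other vertex can be partitioned into pairs {a, b} such that a and b are non-adjacent, and every vertex in X is adjacent to all vertices outside its own pair. -/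
/-- In an oriented graph in which S(v) induces a tournament for every
vertex v, the set X of vertices non-adjacent to some other vertex can be
partitioned into non-adjacent pairs, each vertex of X being adjacent to every
vertex outside its own pair.  The partition is given by an involutive matching m. -/
theorem nonadjacent_vertices_pair_up {V : Type*} [Fintype V] (E : V → V → Prop)
    (irrefl : ∀ v : V, ¬ E v v)
    (oriented : ∀ u v : V, u ≠ v → ¬(E u v ∧ E v u))
    (hS : ∀ v u w : V, u ≠ v → ¬ E u v → w ≠ v → ¬ E w v → u ≠ w →
      (E u w ∨ E w u)) :
    ∃ m : V → V, ∀ v : V, (∃ u : V, u ≠ v ∧ ¬(E u v ∨ E v u)) →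
      (m v ≠ v ∧ ¬(E (m v) v ∨ E v (m v)) ∧ m (m v) = v ∧
        ∀ w : V, w ≠ v → w ≠ m v → (E v w ∨ E w v)) := by
  classical
  -- each vertex has at most one non-neighbor
  have uniq : ∀ v u w : V, u ≠ v → ¬(E u v ∨ E v u) → w ≠ v → ¬(E w v ∨ E v w) →
      u = w := by
    intro v u w huv hna hwv hna'
    by_contra huw
    push_neg at hna hna'
    obtain ⟨h1, h2⟩ := hna
    obtain ⟨h3, h4⟩ := hna'
    rcases hS v u w huv h1 hwv h3 huw with h | h
    · -- E u w : then v, w ∈ S(u), so v w adjacent, contradiction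
      have hwu : ¬ E w u := fun h' => oriented u w huw ⟨h, h'⟩
      have hvu : ¬ E v u := h2
      rcases hS u v w (Ne.symm huv) hvu (Ne.symm huw) hwu (Ne.symm hwv) with h' | h'
      · exact h4 h'
      · exact h3 h'
    · -- E w u : then v, u ∈ S(w)
      have huw' : ¬ E u w := fun h' => oriented w u (fun e => huw e.symm) ⟨h, h'⟩
      rcases hS w v u (Ne.symm hwv) h4 huw huw' (Ne.symm huv) with h' | h'
      · exact h2 h'
      · exact h1 h'
  set m : V → V := fun v => if h : ∃ u : V, u ≠ v ∧ ¬(E u v ∨ E v u) then h.choose else v with hm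
  have key : ∀ v : V, (∃ u : V, u ≠ v ∧ ¬(E u v ∨ E v u)) →
      m v ≠ v ∧ ¬(E (m v) v ∨ E v (m v)) := by
    intro v hv
    have : m v = hv.choose := dif_pos hv
    rw [this]
    exact hv.choose_spec
  refine ⟨m, ?_⟩
  intro v hv
  obtain ⟨hne, hna⟩ := key v hv
  have hv' : ∃ w : V, w ≠ m v ∧ ¬(E w (m v) ∨ E (m v) w) :=
    ⟨v, Ne.symm hne, fun h => hna h.symm⟩
  obtain ⟨hne2, hna2⟩ := key (m v) hv'
  refine ⟨hne, hna, ?_, ?_⟩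
  · exact uniq (m v) (m (m v)) v hne2 hna2 (Ne.symm hne) (fun h => hna h.symm)
  · intro w hwv hwm
    by_contra hadj
    push_neg at hadj
    exact hwm (uniq v w (m v) hwv (fun h => h.elim hadj.2 hadj.1) hne hna)
end

section
/- Let G be an oriented graph on n ≥ 3 vertices such that every induced 3-vertex subgraph has a vertex of in-degree 2. Then G has at most one pair of non-adjacent vertices, and if {a,b} is such a pair, then for every other vertex w, both (a,w) and (b,w) are edges. -/
/-- An oriented graph on at least 3 vertices in which every induced
3-vertex subgraph has a vertex of in-degree 2 has at most one pair of
non-adjacent vertices; and if {a,b} is such a pair, then both a and b have edges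
to every other vertex. -/
theorem unassisted_structure {V : Type*} [Fintype V] (E : V → V → Prop)
    (hcard : 3 ≤ Fintype.card V)
    (irrefl : ∀ v : V, ¬ E v v)
    (oriented : ∀ u v : V, u ≠ v → ¬(E u v ∧ E v u))
    (htriple : ∀ a b c : V, a ≠ b → a ≠ c → b ≠ c →
      (E b a ∧ E c a) ∨ (E a b ∧ E c b) ∨ (E a c ∧ E b c)) :
    (∀ u v u' v' : V, u ≠ v → u' ≠ v' →
      ¬(E u v ∨ E v u) → ¬(E u' v' ∨ E v' u') →
      (u = u' ∧ v = v') ∨ (u = v' ∧ v = u')) ∧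
    (∀ a b : V, a ≠ b → ¬(E a b ∨ E b a) →
      ∀ w : V, w ≠ a → w ≠ b → E a w ∧ E b w) := by
  have key : ∀ a b : V, a ≠ b → ¬(E a b ∨ E b a) →
      ∀ w : V, w ≠ a → w ≠ b → E a w ∧ E b w := by
    intro a b hab hnadj w hwa hwb
    push_neg at hnadj
    have := htriple a b w hab (Ne.symm hwa) (Ne.symm hwb)
    tauto
  refine ⟨?_, key⟩
  intro u v u' v' huv hu'v' h1 h2
  by_cases huu' : u = u'
  · subst huu'
    left
    refine ⟨rfl, ?_⟩
    by_contra hvv'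
    have h3 := key u v huv h1 v' (Ne.symm hu'v') (fun h => hvv' h.symm)
    exact h2 (Or.inl h3.1)
  · by_cases huv' : u = v'
    · right
      refine ⟨huv', ?_⟩
      by_contra hvu'
      have h3 := key u v huv h1 u' (fun h => hu'v' (h.trans huv'))
        (fun h => hvu' h.symm)
      have h4 := key u' v' hu'v' h2 v (fun h => hvu' h)
        (fun h => huv (h.trans huv'.symm).symm)
      exact oriented v u' hvu' ⟨h3.2, h4.1⟩
    · exfalso
      have h4 := key u' v' hu'v' h2 u huu' huv'
      by_cases hvu' : v = u'
      · have h3 := key u v huv h1 v' (fun h => huv' h.symm)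
          (fun h => hu'v' (h.trans hvu').symm)
        exact oriented u v' huv' ⟨h3.1, h4.2⟩
      · have h3 := key u v huv h1 u' (fun h => huu' h.symm)
          (fun h => hvu' h.symm)
        exact oriented u u' huu' ⟨h3.1, h4.1⟩
end

section
/- Let G be an oriented graph in which every pair of distinct vertices is adjacent except exactly the pairs {D1,D2} and {D3,D4} (with D1,D2,D3,D4 distinct), and suppose every induced 3-vertex subgraph either has a vertex of in-degree 2 or is a directed 3-cycle. Then a contradiction follows; i.e., no oriented graph satisfying this triple condition has two disjoint non-adjacent pairs. -/
/-- There is no oriented graph in which exactly the two disjoint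
pairs {D1,D2} and {D3,D4} are non-adjacent (all other pairs of distinct vertices
being adjacent) while every induced 3-vertex subgraph has a vertex of in-degree 2
or is a directed 3-cycle. -/
theorem no_two_disjoint_nonadjacent_pairs {V : Type*} (E : V → V → Prop)
    (D1 D2 D3 D4 : V)
    (hd12 : D1 ≠ D2) (hd13 : D1 ≠ D3) (hd14 : D1 ≠ D4)
    (hd23 : D2 ≠ D3) (hd24 : D2 ≠ D4) (hd34 : D3 ≠ D4)
    (irrefl : ∀ v : V, ¬ E v v)
    (oriented : ∀ u v : V, u ≠ v → ¬(E u v ∧ E v u))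
    (hadj : ∀ u v : V, u ≠ v →
      ((E u v ∨ E v u) ↔
        ¬((u = D1 ∧ v = D2) ∨ (u = D2 ∧ v = D1) ∨
          (u = D3 ∧ v = D4) ∨ (u = D4 ∧ v = D3))))
    (htriple : ∀ a b c : V, a ≠ b → a ≠ c → b ≠ c →
      ((E b a ∧ E c a) ∨ (E a b ∧ E c b) ∨ (E a c ∧ E b c)) ∨
      ((E a b ∧ E b c ∧ E c a) ∨ (E a c ∧ E c b ∧ E b a))) :
    False := by
  have h12 : ¬ (E D1 D2 ∨ E D2 D1) := by
    intro h
    have := (hadj D1 D2 hd12).mp h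
    exact this (Or.inl ⟨rfl, rfl⟩)
  have h34 : ¬ (E D3 D4 ∨ E D4 D3) := by
    intro h
    have := (hadj D3 D4 hd34).mp h
    exact this (Or.inr (Or.inr (Or.inl ⟨rfl, rfl⟩)))
  have nE12 : ¬ E D1 D2 := fun h => h12 (Or.inl h)
  have nE21 : ¬ E D2 D1 := fun h => h12 (Or.inr h)
  have nE34 : ¬ E D3 D4 := fun h => h34 (Or.inl h)
  have nE43 : ¬ E D4 D3 := fun h => h34 (Or.inr h)
  have t1 := htriple D1 D2 D3 hd12 hd13 hd23
  have hE13 : E D1 D3 := by tauto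
  have t2 := htriple D3 D4 D1 hd34 hd13.symm hd14.symm
  have hE31 : E D3 D1 := by tauto
  exact oriented D1 D3 hd13 ⟨hE13, hE31⟩
end
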